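/- Let S = ⟨g₁, …, g_{n−k}⟩ be a subgroup of the n-qubit Pauli group G_n generated by n−k independent, mutually commuting elements, and suppose −I ∉ S. Then each g_i is Hermitian with g_i² = I, the matrix Π = ∏_{i=1}^{n−k} (I + g_i)/2 is an orthogonal projection (Π² = Π = Π†) whose range is exactly V_S = { v ∈ ℂ^{2^n} : s v = v for all s ∈ S }, and tr(Π) = 2^k. -/

import Mathlib

open scoped Matrix

noncomputable section

/-- The four Pauli matrices `I, σx, σy, σz` as `2 × 2` complex matrices. -/
def pauliMatrix : Fin 4 → Matrix (Fin 2) (Fin 2) ℂ :=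
  ![1, !![0, 1; 1, 0], !![0, -Complex.I; Complex.I, 0], !![1, 0; 0, -1]]

/-- The `n`-fold tensor (Kronecker) product of `2 × 2` matrices, as a
`2^n × 2^n` matrix indexed by `Fin n → Fin 2`. -/
def nTensor (n : ℕ) (f : Fin n → Matrix (Fin 2) (Fin 2) ℂ) :
    Matrix (Fin n → Fin 2) (Fin n → Fin 2) ℂ :=
  fun x y => ∏ i, f i (x i) (y i)

/-- Membership in the `n`-qubit Pauli group: a prefactor `±1, ±i` times an
`n`-fold tensor product of Pauli matrices. -/
def IsPauliGroupElem (n : ℕ) (A : Matrix (Fin n → Fin 2) (Fin n → Fin 2) ℂ) : Prop :=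
  ∃ α : ℂ, (α = 1 ∨ α = -1 ∨ α = Complex.I ∨ α = -Complex.I) ∧
    ∃ p : Fin n → Fin 4, A = α • nTensor n fun i => pauliMatrix (p i)

/-- The joint fixed subspace `V_S = {v | s v = v for all s ∈ S}` of a set `S` of matrices. -/
def fixedSubspace (n : ℕ) (S : Set (Matrix (Fin n → Fin 2) (Fin n → Fin 2) ℂ)) :
    Submodule ℂ ((Fin n → Fin 2) → ℂ) where
  carrier := {v | ∀ s ∈ S, s.mulVec v = v}
  add_mem' := by
    intro a b ha hb s hs
    rw [Matrix.mulVec_add, ha s hs, hb s hs]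
  zero_mem' := by
    intro s hs
    rw [Matrix.mulVec_zero]
  smul_mem' := by
    intro c a ha s hs
    rw [Matrix.mulVec_smul, ha s hs]

/-!
Each `gᵢ` squares to `±I`, and `−I ∉ S` forces `gᵢ² = I`; a unitary involution is Hermitian,
so the `Qᵢ = (I + gᵢ)/2` are commuting orthogonal projections with `gᵢ Qᵢ = Qᵢ`. Their product `Π`
is therefore an orthogonal projection with `s Π = Π` for all `s ∈ S`, and it fixes every vector
fixed by all the `gᵢ`; hence its range is `V_S`.

For the trace, expand `Π = 2^{-(n-k)} ∑_B ∏_{i ∈ B} gᵢ`. Every nonempty product is a Pauli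
element of `S`. A Pauli element has trace `0` unless it is a scalar `α I` with `α⁴ = 1`; in `S`
such a scalar must be `I`, because `−I ∉ S` and `(±i I)² = −I`; and by independence no product
of distinct commuting generators equals `I`. Only `B = ∅` contributes, giving
`2^{-(n-k)} · 2^n = 2^k`.
-/

lemma Commute.smul_one_add_right {R A : Type*} [CommSemiring R] [Semiring A] [Algebra R A]
    {a b : A} (h : Commute a b) (c : R) : Commute a (c • (1 + b)) :=
  ((Commute.one_right a).add_right h).smul_right c

lemma List.mul_prod_eq_prod_of_commute {M : Type*} [Monoid M] {a : M} {l : List M}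
    (hc : ∀ x ∈ l, Commute a x) (h : ∃ x ∈ l, a * x = x) : a * l.prod = l.prod := by
  induction l with
  | nil => simp at h
  | cons b l ih =>
    simp only [List.forall_mem_cons, List.exists_mem_cons_iff] at hc h
    rw [List.prod_cons, ← mul_assoc]
    rcases h with hb | hl
    · rw [hb]
    · rw [hc.1.eq, mul_assoc, ih hc.2 hl]

lemma list_prod_map_ne_one_of_closure_lt {G κ : Type*} [Group G] {g : κ → G}
    (hcomm : ∀ i j, Commute (g i) (g j))
    (hindep : ∀ i, Subgroup.closure (Set.range fun j : {j : κ // j ≠ i} => g j)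
      < Subgroup.closure (Set.range g))
    {l : List κ} (hl : l.Nodup) (hne : l ≠ []) : (l.map g).prod ≠ 1 := by
  classical
  intro h1
  obtain ⟨i, hi⟩ := List.exists_mem_of_ne_nil l hne
  set H := Subgroup.closure (Set.range fun j : {j : κ // j ≠ i} => g j)
  have hrest : ((l.erase i).map g).prod ∈ H := by
    refine H.list_prod_mem fun x hx => ?_
    obtain ⟨j, hj, rfl⟩ := List.mem_map.1 hx
    exact Subgroup.subset_closure ⟨⟨j, fun hji => (hl.mem_erase_iff.1 hj).1 hji⟩, rfl⟩
  have hgi : g i ∈ H := by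
    have hperm : g i * ((l.erase i).map g).prod = 1 := by
      rw [← h1, ← List.prod_cons, ← List.map_cons]
      refine ((List.perm_cons_erase hi).symm.map g).prod_eq' ?_
      exact List.Pairwise.map _ (fun a b _ => hcomm a b) ((List.perm_cons_erase hi).nodup_iff.1 hl)
    rw [eq_inv_of_mul_eq_one_left hperm]
    exact H.inv_mem hrest
  refine (hindep i).not_ge ((Subgroup.closure_le _).2 ?_)
  rintro _ ⟨j, rfl⟩
  by_cases hji : j = i
  · rwa [hji]
  · exact Subgroup.subset_closure ⟨⟨j, hji⟩, rfl⟩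

lemma isSelfAdjoint_of_mem_unitary_of_mul_self_eq_one {R : Type*} [Monoid R] [StarMul R] {u : R}
    (hu : u ∈ unitary R) (h : u * u = 1) : IsSelfAdjoint u :=
  left_inv_eq_right_inv (Unitary.star_mul_self_of_mem hu) h

lemma IsStarProjection.list_prod {R : Type*} [Semiring R] [StarRing R] {l : List R}
    (hl : ∀ p ∈ l, IsStarProjection p) (hc : l.Pairwise Commute) : IsStarProjection l.prod := by
  induction l with
  | nil => exact .one _
  | cons p l ih =>
    simp only [List.forall_mem_cons] at hl
    rw [List.pairwise_cons] at hc
    exact hl.1.mul (ih hl.2 hc.2) (Commute.list_prod_right l p hc.1)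

lemma isStarProjection_half_smul_one_add {𝕜 A : Type*} [Field 𝕜] [NeZero (2 : 𝕜)] [StarRing 𝕜]
    [Ring A] [StarRing A] [Algebra 𝕜 A] [StarModule 𝕜 A] {u : A}
    (hu : IsSelfAdjoint u) (hsq : u * u = 1) : IsStarProjection ((2 : 𝕜)⁻¹ • (1 + u)) where
  isIdempotentElem := by
    have : (1 + u) * (1 + u) = (2 : 𝕜) • (1 + u) := by
      rw [add_mul, mul_add, mul_add, hsq, two_smul]; noncomm_ring
    rw [IsIdempotentElem, smul_mul_smul_comm, this, smul_smul, mul_assoc,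
      inv_mul_cancel₀ two_ne_zero, mul_one]
  isSelfAdjoint := by
    simp [IsSelfAdjoint, hu.star_eq]

lemma Matrix.list_prod_mulVec_eq_self {ι R : Type*} [Fintype ι] [DecidableEq ι] [CommSemiring R]
    {l : List (Matrix ι ι R)} {v : ι → R} (h : ∀ A ∈ l, A *ᵥ v = v) : l.prod *ᵥ v = v := by
  induction l with
  | nil => exact Matrix.one_mulVec v
  | cons A l ih =>
    simp only [List.forall_mem_cons] at h
    rw [List.prod_cons, ← Matrix.mulVec_mulVec, ih h.2, h.1]

section TraceExpansion

variable {ι κ R : Type*} [Fintype ι] [DecidableEq ι] [CommRing R] (c : R) {g : κ → Matrix ι ι R}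
  (hcomm : ∀ i j, Commute (g i) (g j))
  (htr : ∀ l : List κ, l.Nodup → l ≠ [] → (l.map g).prod.trace = 0)
include hcomm htr

lemma trace_list_prod_smul_one_add_mul_prod {l B : List κ} (hlB : (l ++ B).Nodup) :
    ((l.map fun i => c • (1 + g i)).prod * (B.map g).prod).trace =
      if B = [] then c ^ l.length * Fintype.card ι else 0 := by
  induction l generalizing B with
  | nil =>
    rcases eq_or_ne B [] with rfl | hB
    · simp
    · simpa [hB] using htr B hlB hB
  | cons i l ih =>
    have hmove : g i * ((l.map fun i => c • (1 + g i)).prod * (B.map g).prod) =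
        (l.map fun i => c • (1 + g i)).prod * ((i :: B).map g).prod := by
      have : Commute (g i) (l.map fun i => c • (1 + g i)).prod :=
        Commute.list_prod_right _ _ fun _ hx => by
          obtain ⟨j, -, rfl⟩ := List.mem_map.1 hx
          exact (hcomm i j).smul_one_add_right c
      rw [← mul_assoc, this.eq, List.map_cons, List.prod_cons, mul_assoc]
    have hB : (l ++ B).Nodup := (List.nodup_cons.1 hlB).2
    have hiB : (l ++ i :: B).Nodup := List.nodup_middle.2 hlB
    rw [List.map_cons, List.prod_cons, mul_assoc, smul_mul_assoc, add_mul, one_mul, hmove,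
      Matrix.trace_smul, Matrix.trace_add, ih hB, ih hiB, if_neg (List.cons_ne_nil i B),
      add_zero, List.length_cons, pow_succ]
    split_ifs
    · rw [smul_eq_mul]; ring
    · rw [smul_zero]

lemma trace_list_prod_smul_one_add {l : List κ} (hl : l.Nodup) :
    (l.map fun i => c • (1 + g i)).prod.trace = c ^ l.length * Fintype.card ι := by
  simpa using trace_list_prod_smul_one_add_mul_prod c hcomm htr (B := []) (by simpa using hl)

end TraceExpansion

lemma Complex.pow_four_eq_one_iff {α : ℂ} : α ^ 4 = 1 ↔ α = 1 ∨ α = -1 ∨ α = I ∨ α = -I := by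
  constructor
  · intro h
    have : (α - 1) * (α + 1) * (α - I) * (α + I) = 0 := by
      linear_combination h - (α ^ 2 - 1) * I_sq
    simp only [mul_eq_zero, sub_eq_zero, add_eq_zero_iff_eq_neg] at this
    tauto
  · rintro (rfl | rfl | rfl | rfl) <;> norm_num

lemma pauliMatrix_mul_self (a : Fin 4) : pauliMatrix a * pauliMatrix a = 1 := by
  fin_cases a <;> ext i j <;> fin_cases i <;> fin_cases j <;>
    simp [pauliMatrix, Matrix.mul_apply]

/-- With `I, σx, σy, σz` indexed by `0, 1, 2, 3`, the index of a product is the bitwise xor. -/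
lemma exists_pauliMatrix_mul_eq_smul_xor (a b : Fin 4) :
    ∃ α : ℂ, α ^ 4 = 1 ∧ pauliMatrix a * pauliMatrix b = α • pauliMatrix (a ^^^ b) := by
  fin_cases a <;> fin_cases b <;>
    first
    | refine ⟨1, by norm_num, ?_⟩
      · ext i j; fin_cases i <;> fin_cases j <;> simp [pauliMatrix, Matrix.mul_apply]
    | refine ⟨Complex.I, by norm_num, ?_⟩
      · ext i j; fin_cases i <;> fin_cases j <;> simp [pauliMatrix, Matrix.mul_apply]
    | refine ⟨-Complex.I, by norm_num, ?_⟩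
      · ext i j; fin_cases i <;> fin_cases j <;> simp [pauliMatrix, Matrix.mul_apply]

lemma trace_pauliMatrix {a : Fin 4} (ha : a ≠ 0) : (pauliMatrix a).trace = 0 := by
  fin_cases a <;> simp_all [pauliMatrix, Matrix.trace]

section nTensor

variable {n : ℕ}

lemma nTensor_mul (f h : Fin n → Matrix (Fin 2) (Fin 2) ℂ) :
    nTensor n f * nTensor n h = nTensor n (fun i => f i * h i) := by
  ext x y
  simp only [nTensor, Matrix.mul_apply, ← Finset.prod_mul_distrib, ← Fintype.piFinset_univ]
  exact (Finset.prod_univ_sum _ fun i a => f i (x i) a * h i a (y i)).symm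

lemma nTensor_one : nTensor n (fun _ => 1) = 1 := by
  ext x y
  by_cases h : x = y
  · subst h
    simp [nTensor]
  · obtain ⟨i, hi⟩ := Function.ne_iff.mp h
    simpa [nTensor, h] using Finset.prod_eq_zero (Finset.mem_univ i) (by simp [hi])

lemma nTensor_smul (c : Fin n → ℂ) (f : Fin n → Matrix (Fin 2) (Fin 2) ℂ) :
    nTensor n (fun i => c i • f i) = (∏ i, c i) • nTensor n f := by
  ext x y
  simp [nTensor, Finset.prod_mul_distrib]

lemma trace_nTensor (f : Fin n → Matrix (Fin 2) (Fin 2) ℂ) :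
    (nTensor n f).trace = ∏ i, (f i).trace := by
  simp only [Matrix.trace, Matrix.diag, nTensor, ← Fintype.piFinset_univ]
  exact (Finset.prod_univ_sum _ fun i a => f i a a).symm

end nTensor

lemma isPauliGroupElem_iff {n : ℕ} {A : Matrix (Fin n → Fin 2) (Fin n → Fin 2) ℂ} :
    IsPauliGroupElem n A ↔
      ∃ α : ℂ, α ^ 4 = 1 ∧ ∃ p : Fin n → Fin 4, A = α • nTensor n fun i => pauliMatrix (p i) := by
  simp only [IsPauliGroupElem, Complex.pow_four_eq_one_iff]

namespace IsPauliGroupElem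

variable {n : ℕ} {A B : Matrix (Fin n → Fin 2) (Fin n → Fin 2) ℂ}

lemma one : IsPauliGroupElem n 1 :=
  isPauliGroupElem_iff.2 ⟨1, one_pow 4, fun _ => 0, by simp [pauliMatrix, nTensor_one]⟩

lemma mul (hA : IsPauliGroupElem n A) (hB : IsPauliGroupElem n B) :
    IsPauliGroupElem n (A * B) := by
  obtain ⟨α, hα, p, rfl⟩ := isPauliGroupElem_iff.1 hA
  obtain ⟨β, hβ, q, rfl⟩ := isPauliGroupElem_iff.1 hB
  choose γ hγ hpq using fun i => exists_pauliMatrix_mul_eq_smul_xor (p i) (q i)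
  refine isPauliGroupElem_iff.2 ⟨α * β * ∏ i, γ i, ?_, fun i => p i ^^^ q i, ?_⟩
  · simp [mul_pow, ← Finset.prod_pow, hα, hβ, hγ]
  · rw [smul_mul_smul_comm, nTensor_mul, funext hpq, nTensor_smul, smul_smul]

lemma list_prod {l : List (Matrix (Fin n → Fin 2) (Fin n → Fin 2) ℂ)}
    (hl : ∀ A ∈ l, IsPauliGroupElem n A) : IsPauliGroupElem n l.prod := by
  induction l with
  | nil => exact one
  | cons A l ih =>
    simp only [List.forall_mem_cons] at hl
    exact hl.1.mul (ih hl.2)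

lemma mul_self_eq_one_or_neg_one (hA : IsPauliGroupElem n A) : A * A = 1 ∨ A * A = -1 := by
  obtain ⟨α, hα, p, rfl⟩ := isPauliGroupElem_iff.1 hA
  have hα2 : (α * α) * (α * α) = 1 := by rw [← hα]; ring
  rw [smul_mul_smul_comm, nTensor_mul]
  simp only [pauliMatrix_mul_self, nTensor_one]
  rcases mul_self_eq_one_iff.1 hα2 with h | h <;> simp [h]

lemma trace_eq_zero_or_eq_smul_one (hA : IsPauliGroupElem n A) :
    A.trace = 0 ∨ ∃ α : ℂ, α ^ 4 = 1 ∧ A = α • 1 := by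
  obtain ⟨α, hα, p, rfl⟩ := isPauliGroupElem_iff.1 hA
  by_cases hp : ∃ i, p i ≠ 0
  · obtain ⟨i, hi⟩ := hp
    left
    rw [Matrix.trace_smul, trace_nTensor, Finset.prod_eq_zero (Finset.mem_univ i)
      (trace_pauliMatrix hi), smul_zero]
  · push Not at hp
    right
    refine ⟨α, hα, ?_⟩
    simp [hp, pauliMatrix, nTensor_one]

lemma trace_eq_zero_or_eq_one (hA : IsPauliGroupElem n A) (hneg : A ≠ -1) (hsq : A * A ≠ -1) :
    A.trace = 0 ∨ A = 1 := by
  refine hA.trace_eq_zero_or_eq_smul_one.imp_right ?_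
  rintro ⟨α, hα, rfl⟩
  have hα2 : α * α ≠ -1 := fun h => hsq (by rw [smul_mul_smul_comm, h, one_mul, neg_smul, one_smul])
  have hα1 : α ≠ -1 := fun h => hneg (by simp [h])
  have : (α * α) * (α * α) = 1 := by rw [← hα]; ring
  rcases mul_self_eq_one_iff.1 this with h | h
  · rcases mul_self_eq_one_iff.1 h with rfl | rfl
    · exact one_smul _ _
    · exact absurd rfl hα1
  · exact absurd h hα2

end IsPauliGroupElem

lemma range_mulVecLin_eq_fixedSubspace {n : ℕ} {P : Matrix (Fin n → Fin 2) (Fin n → Fin 2) ℂ}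
    {X : Set (Matrix (Fin n → Fin 2) (Fin n → Fin 2) ℂ)} (habsorb : ∀ s ∈ X, s * P = P)
    (hfix : ∀ v, (∀ s ∈ X, s *ᵥ v = v) → P *ᵥ v = v) :
    LinearMap.range P.mulVecLin = fixedSubspace n X := by
  apply le_antisymm
  · rintro _ ⟨w, rfl⟩ s hs
    rw [Matrix.mulVecLin_apply, Matrix.mulVec_mulVec, habsorb s hs]
  · exact fun v hv => ⟨v, hfix v hv⟩

section CommutingInvolutions

variable {n m : ℕ} {g : Fin m → Matrix.unitaryGroup (Fin n → Fin 2) ℂ}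
  (hcomm : ∀ i j, Commute (g i : Matrix (Fin n → Fin 2) (Fin n → Fin 2) ℂ) (g j))
  (hsq : ∀ i, (g i : Matrix (Fin n → Fin 2) (Fin n → Fin 2) ℂ) * g i = 1)
include hcomm hsq

lemma isStarProjection_prod_half_smul_one_add :
    IsStarProjection (List.ofFn fun i =>
      (2 : ℂ)⁻¹ • (1 + (g i : Matrix (Fin n → Fin 2) (Fin n → Fin 2) ℂ))).prod := by
  refine .list_prod (fun Q hQ => ?_) (List.pairwise_ofFn.2 fun i j _ => ?_)
  · obtain ⟨i, rfl⟩ := List.mem_ofFn.1 hQ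
    exact isStarProjection_half_smul_one_add
      (isSelfAdjoint_of_mem_unitary_of_mul_self_eq_one (g i).2 (hsq i)) (hsq i)
  · exact (((hcomm i j).smul_one_add_right _).symm.smul_one_add_right _).symm

lemma range_prod_half_smul_one_add :
    LinearMap.range (List.ofFn fun i =>
      (2 : ℂ)⁻¹ • (1 + (g i : Matrix (Fin n → Fin 2) (Fin n → Fin 2) ℂ))).prod.mulVecLin =
      fixedSubspace n (Subtype.val ''
        (Subgroup.closure (Set.range g) : Set (Matrix.unitaryGroup (Fin n → Fin 2) ℂ))) := by
  set Q := fun i => (2 : ℂ)⁻¹ • (1 + (g i : Matrix (Fin n → Fin 2) (Fin n → Fin 2) ℂ))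
  have hgQ (i : Fin m) : (g i : Matrix (Fin n → Fin 2) (Fin n → Fin 2) ℂ) * Q i = Q i := by
    rw [mul_smul_comm, mul_add, mul_one, hsq, add_comm]
  have hgP (i : Fin m) : g i ∈ MulAction.stabilizer _ (List.ofFn Q).prod := by
    refine List.mul_prod_eq_prod_of_commute (fun _ hQ => ?_) ⟨Q i, List.mem_ofFn.2 ⟨i, rfl⟩, hgQ i⟩
    obtain ⟨j, rfl⟩ := List.mem_ofFn.1 hQ
    exact (hcomm i j).smul_one_add_right _
  refine range_mulVecLin_eq_fixedSubspace ?_ fun v hv => ?_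
  · rintro _ ⟨u, hu, rfl⟩
    exact (Subgroup.closure_le _).2 (Set.range_subset_iff.2 hgP) hu
  · refine Matrix.list_prod_mulVec_eq_self fun _ hQ => ?_
    obtain ⟨i, rfl⟩ := List.mem_ofFn.1 hQ
    have hgv := hv _ ⟨g i, Subgroup.subset_closure ⟨i, rfl⟩, rfl⟩
    rw [Matrix.smul_mulVec, Matrix.add_mulVec, Matrix.one_mulVec, hgv, ← two_smul ℂ v, smul_smul,
      inv_mul_cancel₀ two_ne_zero, one_smul]

end CommutingInvolutions

section PauliStabilizer

variable {n : ℕ} {S : Subgroup (Matrix.unitaryGroup (Fin n → Fin 2) ℂ)}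
  (hnegI : ∀ s ∈ S, (s : Matrix (Fin n → Fin 2) (Fin n → Fin 2) ℂ) ≠ -1)
include hnegI

lemma IsPauliGroupElem.mul_self_eq_one_of_mem {u : Matrix.unitaryGroup (Fin n → Fin 2) ℂ}
    (hu : u ∈ S) (hpauli : IsPauliGroupElem n u) :
    (u : Matrix (Fin n → Fin 2) (Fin n → Fin 2) ℂ) * u = 1 :=
  hpauli.mul_self_eq_one_or_neg_one.resolve_right (hnegI _ (S.mul_mem hu hu))

lemma IsPauliGroupElem.trace_eq_zero_or_eq_one_of_mem {u : Matrix.unitaryGroup (Fin n → Fin 2) ℂ}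
    (hu : u ∈ S) (hpauli : IsPauliGroupElem n u) :
    (u : Matrix (Fin n → Fin 2) (Fin n → Fin 2) ℂ).trace = 0 ∨ u = 1 :=
  (hpauli.trace_eq_zero_or_eq_one (hnegI u hu) (hnegI _ (S.mul_mem hu hu))).imp_right
    Subtype.ext

end PauliStabilizer

lemma trace_list_prod_eq_zero_of_independent {n : ℕ} {κ : Type*}
    {g : κ → Matrix.unitaryGroup (Fin n → Fin 2) ℂ} (hpauli : ∀ i, IsPauliGroupElem n (g i))
    (hcomm : ∀ i j, Commute (g i) (g j))
    (hindep : ∀ i, Subgroup.closure (Set.range fun j : {j : κ // j ≠ i} => g j)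
      < Subgroup.closure (Set.range g))
    (hnegI : ∀ s ∈ Subgroup.closure (Set.range g),
      (s : Matrix (Fin n → Fin 2) (Fin n → Fin 2) ℂ) ≠ -1)
    {l : List κ} (hl : l.Nodup) (hne : l ≠ []) :
    (l.map fun i => (g i : Matrix (Fin n → Fin 2) (Fin n → Fin 2) ℂ)).prod.trace = 0 := by
  have hcoe : (l.map fun i => (g i : Matrix (Fin n → Fin 2) (Fin n → Fin 2) ℂ)).prod =
      ((l.map g).prod : Matrix.unitaryGroup (Fin n → Fin 2) ℂ) := by
    rw [Submonoid.coe_list_prod, List.map_map]; rfl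
  have hmem : (l.map g).prod ∈ Subgroup.closure (Set.range g) :=
    Subgroup.list_prod_mem _ fun _ hx => by
      obtain ⟨i, -, rfl⟩ := List.mem_map.1 hx
      exact Subgroup.subset_closure ⟨i, rfl⟩
  have hpauli' : IsPauliGroupElem n ((l.map g).prod : Matrix (Fin n → Fin 2) (Fin n → Fin 2) ℂ) :=
    hcoe ▸ IsPauliGroupElem.list_prod fun _ hx => by
      obtain ⟨i, -, rfl⟩ := List.mem_map.1 hx
      exact hpauli i
  rw [hcoe]
  exact (hpauli'.trace_eq_zero_or_eq_one_of_mem hnegI hmem).resolve_right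
    (list_prod_map_ne_one_of_closure_lt hcomm hindep hl hne)

/-- For `S = ⟨g₁, …, g_{n−k}⟩` generated by independent commuting Pauli-group elements with
`−I ∉ S`: each `gᵢ` is Hermitian with `gᵢ² = I`, the matrix `Π = ∏ᵢ (I + gᵢ)/2` is an
orthogonal projection (`Π² = Π = Π†`) whose range is exactly `V_S`, and `tr Π = 2^k`. -/
theorem stmt3 (n k : ℕ) (hk : k ≤ n)
    (g : Fin (n - k) → Matrix.unitaryGroup (Fin n → Fin 2) ℂ)
    (hpauli : ∀ i, IsPauliGroupElem n (g i))
    (hcomm : ∀ i j, g i * g j = g j * g i)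
    (hindep : ∀ i : Fin (n - k),
      Subgroup.closure (Set.range fun j : {j : Fin (n - k) // j ≠ i} => g j)
        < Subgroup.closure (Set.range g))
    (S : Subgroup (Matrix.unitaryGroup (Fin n → Fin 2) ℂ))
    (hS : S = Subgroup.closure (Set.range g))
    (hnegI : ∀ s ∈ S, (s : Matrix (Fin n → Fin 2) (Fin n → Fin 2) ℂ) ≠ -1)
    (P : Matrix (Fin n → Fin 2) (Fin n → Fin 2) ℂ)
    (hP : P = (List.ofFn fun i : Fin (n - k) =>
      ((2 : ℂ)⁻¹ • (1 + (g i : Matrix (Fin n → Fin 2) (Fin n → Fin 2) ℂ)))).prod) :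
    (∀ i, (g i : Matrix (Fin n → Fin 2) (Fin n → Fin 2) ℂ)ᴴ = g i) ∧
    (∀ i, (g i : Matrix (Fin n → Fin 2) (Fin n → Fin 2) ℂ) *
      (g i : Matrix (Fin n → Fin 2) (Fin n → Fin 2) ℂ) = 1) ∧
    P * P = P ∧ Pᴴ = P ∧
    LinearMap.range P.mulVecLin =
      fixedSubspace n
        ((fun u : Matrix.unitaryGroup (Fin n → Fin 2) ℂ =>
          (u : Matrix (Fin n → Fin 2) (Fin n → Fin 2) ℂ)) '' (S : Set _)) ∧
    P.trace = 2 ^ k := by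
  subst hS hP
  have hcomm' (i j : Fin (n - k)) :
      Commute (g i : Matrix (Fin n → Fin 2) (Fin n → Fin 2) ℂ) (g j) :=
    congrArg Subtype.val (hcomm i j)
  have hsq (i : Fin (n - k)) : (g i : Matrix (Fin n → Fin 2) (Fin n → Fin 2) ℂ) * g i = 1 :=
    (hpauli i).mul_self_eq_one_of_mem hnegI (Subgroup.subset_closure ⟨i, rfl⟩)
  have hproj := isStarProjection_prod_half_smul_one_add hcomm' hsq
  refine ⟨fun i => (isSelfAdjoint_of_mem_unitary_of_mul_self_eq_one (g i).2 (hsq i)).star_eq,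
    hsq, hproj.isIdempotentElem.eq, hproj.isSelfAdjoint.star_eq,
    range_prod_half_smul_one_add hcomm' hsq, ?_⟩
  have hcard : (Fintype.card (Fin n → Fin 2) : ℂ) = 2 ^ (n - k) * 2 ^ k := by
    rw [← pow_add, Nat.sub_add_cancel hk]
    simp
  rw [List.ofFn_eq_map, trace_list_prod_smul_one_add _ hcomm'
      (fun _ => trace_list_prod_eq_zero_of_independent hpauli hcomm hindep hnegI)
      (List.nodup_finRange _),
    List.length_finRange, hcard, inv_pow, inv_mul_cancel_left₀ (pow_ne_zero _ two_ne_zero)]
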